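/- arXiv:1411.4495 — 4 statements merged into one kernel-verified Lean document; each statement's English description precedes it below -/
import Mathlib

section
/- The action institution satisfies the satisfaction condition: for an action signature morphism η : H → H', an H'-action structure Ω', and an H-action sentence g_pre → [a] m̄ ▷ g_post, the reduct Ω'|η satisfies the sentence if and only if Ω' satisfies its translation G(η_V)(g_pre) → [η_A(a)] η_M(m̄) ▷ G(η_V)(g_post). -/
/-- An institution of guards over values `Val` (with its satisfaction condition). -/
structure GuardInst (Val : Type) where
  Sen : Type → Type
  tr : {V V' : Type} → (V → V') → Sen V → Sen V'
  sat : {V : Type} → (V → Val) → Sen V → Prop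
  satisfaction : ∀ {V V' : Type} (v : V → V') (ω' : V' → Val) (g : Sen V),
    sat ω' (tr v g) ↔ sat (ω' ∘ v) g

/-- An action structure over the action signature `(A, M, V)`:
a transition relation `ω →(a, m̄) ω'` on valuations. -/
def ActStr (A M V Val : Type) : Type :=
  (V → Val) → A → Set M → (V → Val) → Prop

/-- The reduct of an `H'`-action structure along the action signature morphism
`η = (ηA, ηM, ηV) : H → H'`: it contains `ω₁'∘ηV →(a, ηM⁻¹(m̄')) ω₂'∘ηV`
for each transition `ω₁' →(ηA a, m̄') ω₂'` of `Ω'`. -/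
def reduct {A A' M M' V V' Val : Type} (ηA : A → A') (ηM : M → M') (ηV : V → V')
    (Ω' : ActStr A' M' V' Val) : ActStr A M V Val :=
  fun ω₁ a m ω₂ => ∃ ω₁' ω₂' m', Ω' ω₁' (ηA a) m' ω₂' ∧
    ω₁ = ω₁' ∘ ηV ∧ ω₂ = ω₂' ∘ ηV ∧ m = ηM ⁻¹' m'

/-- Satisfaction of the action sentence `g_pre → [a] m̄ ▷ g_post` by `Ω`. -/
def ActSat {A M V Val : Type} (GI : GuardInst Val) (Ω : ActStr A M V Val)
    (gpre : GI.Sen V) (a : A) (mbar : Set M) (gpost : GI.Sen V) : Prop :=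
  ∀ ω ω' m', GI.sat ω gpre → Ω ω a m' ω' → GI.sat ω' gpost ∧ mbar ⊆ m'

/-- The action institution satisfies the satisfaction condition: the reduct
`Ω'|η` satisfies `g_pre → [a] m̄ ▷ g_post` iff `Ω'` satisfies the translated
sentence `G(ηV)(g_pre) → [ηA a] ηM(m̄) ▷ G(ηV)(g_post)`. -/
theorem action_satisfaction_condition {A A' M M' V V' Val : Type}
    (GI : GuardInst Val) (ηA : A → A') (ηM : M → M') (ηV : V → V')
    (Ω' : ActStr A' M' V' Val) (gpre gpost : GI.Sen V) (a : A) (mbar : Set M) :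
    ActSat GI (reduct ηA ηM ηV Ω') gpre a mbar gpost ↔
      ActSat GI Ω' (GI.tr ηV gpre) (ηA a) (ηM '' mbar) (GI.tr ηV gpost) := by
  constructor
  · intro h ω ω' m' hpre htr
    have := h (ω ∘ ηV) (ω' ∘ ηV) (ηM ⁻¹' m')
      ((GI.satisfaction ηV ω gpre).mp hpre)
      ⟨ω, ω', m', htr, rfl, rfl, rfl⟩
    exact ⟨(GI.satisfaction ηV ω' gpost).mpr this.1,
      Set.image_subset_iff.mpr this.2⟩
  · intro h ω ω' m hpre ⟨ω₁', ω₂', m', htr, h1, h2, h3⟩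
    subst h1 h2 h3
    have := h ω₁' ω₂' m' ((GI.satisfaction ηV ω₁' gpre).mpr hpre) htr
    exact ⟨(GI.satisfaction ηV ω₂' gpost).mp this.1,
      Set.image_subset_iff.mp this.2⟩
end

section
/- Reducts of action structures can introduce non-determinism: there exist an action signature H with variables {x, y}, a deterministic H-action structure Ω (interpreting a single action a as the assignment x := x + y over natural-number valuations), and an action signature morphism η into H from the signature with only variable {x}, such that the reduct Ω|η is not deterministic. -/
/-- An action structure is deterministic if every action yields at most one
(message set, post-state) per pre-state. -/
def Deterministic {A M V Val : Type} (Ω : ActStr A M V Val) : Prop :=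
  ∀ ω a m₁ ω₁ m₂ ω₂, Ω ω a m₁ ω₁ → Ω ω a m₂ ω₂ → m₁ = m₂ ∧ ω₁ = ω₂

/-- The signature `H` with one action `a`, no messages, and variables `{x, y}`
(encoded as `Fin 2`, with `x = 0`, `y = 1`), over natural-number valuations;
`Ωxy` interprets the single action as the assignment `x := x + y`,
emitting no messages. -/
def Ωxy : ActStr Unit Empty (Fin 2) ℕ :=
  fun ω _ m ω' => m = ∅ ∧ ω' 0 = ω 0 + ω 1 ∧ ω' 1 = ω 1

/-- The inclusion morphism from the signature with only the variable `{x}`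
(encoded as `Unit`) into `H` (identity on actions and on the empty set of
messages). -/
def ηV : Unit → Fin 2 := fun _ => 0

/-- Reducts of action structures can introduce non-determinism: `Ωxy` (the
deterministic assignment `x := x + y`) becomes non-deterministic after
reducting away the variable `y`. -/
theorem reduct_can_introduce_nondeterminism :
    Deterministic Ωxy ∧
      ¬ Deterministic (reduct (id : Unit → Unit) (id : Empty → Empty) ηV Ωxy) := by
  constructor
  · intro ω a m₁ ω₁ m₂ ω₂ h₁ h₂
    obtain ⟨hm₁, hx₁, hy₁⟩ := h₁
    obtain ⟨hm₂, hx₂, hy₂⟩ := h₂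
    refine ⟨hm₁.trans hm₂.symm, funext fun i => ?_⟩
    fin_cases i
    · simpa using hx₁.trans hx₂.symm
    · simpa using hy₁.trans hy₂.symm
  · intro h
    have h01 : reduct (id : Unit → Unit) (id : Empty → Empty) ηV Ωxy
        (fun _ => 0) () ∅ (fun _ => 0) :=
      ⟨fun _ => 0, fun _ => 0, ∅, ⟨rfl, rfl, rfl⟩, rfl, rfl, by simp⟩
    have h11 : reduct (id : Unit → Unit) (id : Empty → Empty) ηV Ωxy
        (fun _ => 0) () ∅ (fun _ => 1) :=
      ⟨fun i => if i = 0 then 0 else 1, fun _ => 1, ∅, ⟨rfl, by simp, by simp⟩,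
        rfl, rfl, by simp⟩
    have := (h _ _ _ _ _ _ h01 h11).2
    exact absurd (congrFun this ()) (by simp)
end

section
/- If the prioritised transition set T of a state machine sentence is syntactically deterministic (i.e., T is a partial function S × (E ∪ F) ⇀ G × A × 𝒫(F) × S) and the action structure Ω is deterministic, then the transition relation Δ_Θ of any state machine structure Θ satisfying (s₀, T) over Ω is deterministic, i.e., Δ_Θ is a partial function C ⇀ 𝒫(M) × C on configurations C = (V → Val) × 𝒫(E ∪ F) × S. -/
/-- `Δ_Θ`: the least transition relation on configurations
`C = (V → Val) × Pool × S` determined by the sentence `(s₀, T)` and the action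
structure `Ω`.  Events are managed in an abstract event pool `Pool` with a
deterministic selection scheme `sel` (extracting the next event) and an
insertion operation `add` (adding a set of events, completion events being
prioritised).  Rule `fire`: if a `T`-transition `s →(p[g]/a,f̄) s'` has its
guard satisfied and `ω →(a,m̄)_Ω ω'`, then
`(ω, p::p̄, s) →(m̄ \ E) (ω', p̄ ⊲ ((m̄ ∩ E) ∪ f̄), s')`.
Rule `discard`: if no `T`-transition from `s` triggered by `p` has its guard
satisfied, the event is discarded. -/
inductive Delta {V Val Guard Act Evt S Pool : Type}
    (E : Set Evt) (sel : Pool → Option (Evt × Pool)) (add : Pool → Set Evt → Pool)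
    (gsat : (V → Val) → Guard → Prop)
    (Ω : (V → Val) → Act → Set Evt → (V → Val) → Prop)
    (T : S → Evt → Guard → Act → Set Evt → S → Prop) :
    ((V → Val) × Pool × S) → Set Evt → ((V → Val) × Pool × S) → Prop where
  | fire : ∀ (ω : V → Val) (pool : Pool) (p : Evt) (rest : Pool) (s : S)
      (g : Guard) (a : Act) (f : Set Evt) (s' : S) (m : Set Evt) (ω' : V → Val),
      sel pool = some (p, rest) → T s p g a f s' → gsat ω g → Ω ω a m ω' →
      Delta E sel add gsat Ω T (ω, pool, s) (m \ E) (ω', add rest ((m ∩ E) ∪ f), s')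
  | discard : ∀ (ω : V → Val) (pool : Pool) (p : Evt) (rest : Pool) (s : S),
      sel pool = some (p, rest) →
      (∀ g a f s', T s p g a f s' → ¬ gsat ω g) →
      Delta E sel add gsat Ω T (ω, pool, s) ∅ (ω, rest, s)

/-- If the prioritised transition set `T` is syntactically deterministic
(a partial function `S × (E ∪ F) ⇀ G × A × 𝒫(F) × S`) and the action
structure `Ω` is deterministic, then the transition relation `Δ_Θ` of any
state machine structure satisfying `(s₀, T)` over `Ω` is deterministic:
a partial function `C ⇀ 𝒫(M) × C` on configurations. -/
theorem delta_deterministic_of_syntactically_deterministic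
    {V Val Guard Act Evt S Pool : Type}
    (E : Set Evt) (sel : Pool → Option (Evt × Pool)) (add : Pool → Set Evt → Pool)
    (gsat : (V → Val) → Guard → Prop)
    (Ω : (V → Val) → Act → Set Evt → (V → Val) → Prop)
    (T : S → Evt → Guard → Act → Set Evt → S → Prop)
    (hT : ∀ s p g₁ a₁ f₁ s₁ g₂ a₂ f₂ s₂,
      T s p g₁ a₁ f₁ s₁ → T s p g₂ a₂ f₂ s₂ → g₁ = g₂ ∧ a₁ = a₂ ∧ f₁ = f₂ ∧ s₁ = s₂)
    (hΩ : ∀ ω a m₁ ω₁ m₂ ω₂, Ω ω a m₁ ω₁ → Ω ω a m₂ ω₂ → m₁ = m₂ ∧ ω₁ = ω₂) :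
    ∀ c m₁ c₁ m₂ c₂, Delta E sel add gsat Ω T c m₁ c₁ →
      Delta E sel add gsat Ω T c m₂ c₂ → m₁ = m₂ ∧ c₁ = c₂ := by
  intro c m₁ c₁ m₂ c₂ h₁ h₂
  cases h₁ with
  | fire ω pool p rest s g a f s' m ω' hsel hT₁ hg hΩ₁ =>
    cases h₂ with
    | fire ω₂ pool₂ p₂ rest₂ s₂ g₂ a₂ f₂ s₂' m₂' ω₂' hsel₂ hT₂ hg₂ hΩ₂ =>
      rw [hsel] at hsel₂
      obtain ⟨hp, hrest⟩ : p = p₂ ∧ rest = rest₂ := by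
        cases hsel₂; exact ⟨rfl, rfl⟩
      subst hp hrest
      obtain ⟨hg', ha, hf, hs⟩ := hT s p g a f s' g₂ a₂ f₂ s₂' hT₁ hT₂
      subst ha hf hs
      obtain ⟨hm, hω⟩ := hΩ ω a m ω' m₂' ω₂' hΩ₁ hΩ₂
      subst hm hω
      exact ⟨rfl, rfl⟩
    | discard ω₂ pool₂ p₂ rest₂ s₂ hsel₂ hno =>
      rw [hsel] at hsel₂
      cases hsel₂
      exact absurd hg (hno g a f s' hT₁)
  | discard ω pool p rest s hsel hno =>
    cases h₂ with
    | fire ω₂ pool₂ p₂ rest₂ s₂ g₂ a₂ f₂ s₂' m₂' ω₂' hsel₂ hT₂ hg₂ hΩ₂ =>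
      rw [hsel] at hsel₂
      cases hsel₂
      exact absurd hg₂ (hno g₂ a₂ f₂ s₂' hT₂)
    | discard ω₂ pool₂ p₂ rest₂ s₂ hsel₂ hno₂ =>
      rw [hsel] at hsel₂
      cases hsel₂
      exact ⟨rfl, rfl⟩
end

section
/- If the prioritised transition set T is semantically deterministic (any two distinct transitions in T with the same source state and trigger have guards that no valuation satisfies simultaneously) and the action structure Ω is deterministic, then the induced transition relation Δ_Θ of any structure satisfying (s₀, T) is deterministic. -/
/-- If the prioritised transition set `T` is semantically deterministic (any
two distinct transitions in `T` with the same source state and trigger have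
guards that no valuation satisfies simultaneously) and the action structure
`Ω` is deterministic, then the induced transition relation `Δ_Θ` of any
structure satisfying `(s₀, T)` is deterministic. -/
theorem delta_deterministic_of_semantically_deterministic
    {V Val Guard Act Evt S Pool : Type}
    (E : Set Evt) (sel : Pool → Option (Evt × Pool)) (add : Pool → Set Evt → Pool)
    (gsat : (V → Val) → Guard → Prop)
    (Ω : (V → Val) → Act → Set Evt → (V → Val) → Prop)
    (T : S → Evt → Guard → Act → Set Evt → S → Prop)
    (hT : ∀ s p g₁ a₁ f₁ s₁ g₂ a₂ f₂ s₂,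
      T s p g₁ a₁ f₁ s₁ → T s p g₂ a₂ f₂ s₂ →
      (g₁, a₁, f₁, s₁) ≠ (g₂, a₂, f₂, s₂) → ∀ ω, ¬ (gsat ω g₁ ∧ gsat ω g₂))
    (hΩ : ∀ ω a m₁ ω₁ m₂ ω₂, Ω ω a m₁ ω₁ → Ω ω a m₂ ω₂ → m₁ = m₂ ∧ ω₁ = ω₂) :
    ∀ c m₁ c₁ m₂ c₂, Delta E sel add gsat Ω T c m₁ c₁ →
      Delta E sel add gsat Ω T c m₂ c₂ → m₁ = m₂ ∧ c₁ = c₂ := by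
  intro c m₁ c₁ m₂ c₂ h1 h2
  cases h1 with
  | fire ω pool p rest s g a f s' m ω' hsel hTr hg hΩ1 =>
    cases h2 with
    | fire ω₂ pool₂ p₂ rest₂ s₂ g₂ a₂ f₂ s₂' m₂' ω₂' hsel₂ hTr₂ hg₂ hΩ2 =>
      rw [hsel] at hsel₂
      injection hsel₂ with h; injection h with hp hr
      subst hp; subst hr
      by_cases heq : (g, a, f, s') = (g₂, a₂, f₂, s₂')
      · obtain ⟨hg', ha, hf, hs⟩ : g = g₂ ∧ a = a₂ ∧ f = f₂ ∧ s' = s₂' := by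
          simpa [Prod.ext_iff] using heq
        subst hg'; subst ha; subst hf; subst hs
        obtain ⟨hm, hω⟩ := hΩ ω a m ω' m₂' ω₂' hΩ1 hΩ2
        subst hm; subst hω
        exact ⟨rfl, rfl⟩
      · exact absurd ⟨hg, hg₂⟩ (hT s p g a f s' g₂ a₂ f₂ s₂' hTr hTr₂ heq ω)
    | discard ω₂ pool₂ p₂ rest₂ s₂ hsel₂ hnone =>
      rw [hsel] at hsel₂
      injection hsel₂ with h; injection h with hp hr
      subst hp
      exact absurd hg (hnone g a f s' hTr)
  | discard ω pool p rest s hsel hnone =>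
    cases h2 with
    | fire ω₂ pool₂ p₂ rest₂ s₂ g₂ a₂ f₂ s₂' m₂' ω₂' hsel₂ hTr₂ hg₂ hΩ2 =>
      rw [hsel] at hsel₂
      injection hsel₂ with h; injection h with hp hr
      subst hp
      exact absurd hg₂ (hnone g₂ a₂ f₂ s₂' hTr₂)
    | discard ω₂ pool₂ p₂ rest₂ s₂ hsel₂ hnone₂ =>
      rw [hsel] at hsel₂
      injection hsel₂ with h; injection h with hp hr
      subst hr
      exact ⟨rfl, rfl⟩
end
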